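/- arXiv:1709.10232 — 3 statements merged into one kernel-verified Lean document; each statement's English description precedes it below -/
import Mathlib

section
/- The classical energy function h satisfies the 0-arrow rule: if ẽ₀(b₁ ⊗ b₂) ≠ 0 then h(ẽ₀(b₁ ⊗ b₂)) = h(b₁ ⊗ b₂) + 1 when φ₀(b₁) ≥ ε₀(b₂), and h(ẽ₀(b₁ ⊗ b₂)) = h(b₁ ⊗ b₂) - 1 when φ₀(b₁) < ε₀(b₂). -/
def inBad (l : ℤ) (b : ℤ × ℤ) : Prop := 0 ≤ b.1 ∧ 0 ≤ b.2 ∧ b.1 + b.2 ≤ l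

def e0 (l : ℤ) (b : ℤ × ℤ) : Option (ℤ × ℤ) :=
  if b.2 < b.1 then some (b.1 - 1, b.2)
  else if b.1 ≤ b.2 ∧ b.1 + (b.2 + 1) ≤ l then some (b.1, b.2 + 1)
  else none

def eps0 (l : ℤ) (b : ℤ × ℤ) : ℤ := l - 2 * b.2 + |b.1 - b.2|
def phi0 (l : ℤ) (b : ℤ × ℤ) : ℤ := l - 2 * b.1 + |b.1 - b.2|

/-- `ẽ₀` on a tensor product, via the tensor product rule -/
def e0Tensor (l : ℤ) (b₁ b₂ : ℤ × ℤ) : Option ((ℤ × ℤ) × (ℤ × ℤ)) :=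
  if phi0 l b₁ ≥ eps0 l b₂ then (e0 l b₁).map (fun b => (b, b₂))
  else (e0 l b₂).map (fun b => (b₁, b))

def hEnergy (b₁ b₂ : ℤ × ℤ) : ℤ :=
  max (max ((b₁.1 + b₁.2) - (b₂.1 + b₂.2)) ((b₂.1 + b₂.2) - (b₁.1 + b₁.2)))
      (max ((b₂.1 + b₂.2) + (b₁.2 - 3 * b₁.1)) ((b₁.1 + b₁.2) + (b₂.1 - 3 * b₂.2)))

/-!
Writing `s = x + y`, one has `φ₀(b) = l + max(-s, y - 3x)` and `ε₀(b) = l + max(-s, x - 3y)`, so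
`h(b₁ ⊗ b₂) = max(s₂ + φ₀(b₁), s₁ + ε₀(b₂)) - l`. The operator `ẽ₀` raises `φ₀` by one, lowers `ε₀`
by one, and changes `s` by `-1` (if `x > y`) or `+1` (if `x ≤ y`). In two of the four cases both
terms of the maximum move by the same amount; in the other two they move in opposite directions,
and the tensor product rule (`φ₀(b₁) ≥ ε₀(b₂)` or not), together with `φ₀, ε₀ ≥ l - s`, forces the
term moving the right way to dominate.
-/

section Crystal

variable {l : ℤ} {b b' : ℤ × ℤ}

lemma phi0_eq_max : phi0 l b = l + max (-(b.1 + b.2)) (b.2 - 3 * b.1) := by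
  rw [phi0, abs_eq_max_neg]
  omega

lemma eps0_eq_max : eps0 l b = l + max (-(b.1 + b.2)) (b.1 - 3 * b.2) := by
  rw [eps0, abs_eq_max_neg]
  omega

lemma e0_eq_some_iff :
    e0 l b = some b' ↔
      (b.2 < b.1 ∧ b' = (b.1 - 1, b.2)) ∨ (b.1 ≤ b.2 ∧ b.1 + (b.2 + 1) ≤ l ∧ b' = (b.1, b.2 + 1)) := by
  unfold e0
  split_ifs with hlt hle
  · simp [hlt, eq_comm]
  · simp [hlt, hle, eq_comm]
  · simp only [false_iff]
    omega

lemma phi0_of_e0_eq_some (h : e0 l b = some b') : phi0 l b' = phi0 l b + 1 := by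
  rcases e0_eq_some_iff.mp h with ⟨hlt, rfl⟩ | ⟨hle, -, rfl⟩ <;> simp only [phi0_eq_max] <;> omega

lemma eps0_of_e0_eq_some (h : e0 l b = some b') : eps0 l b' = eps0 l b - 1 := by
  rcases e0_eq_some_iff.mp h with ⟨hlt, rfl⟩ | ⟨hle, -, rfl⟩ <;> simp only [eps0_eq_max] <;> omega

end Crystal

lemma hEnergy_eq_max (l : ℤ) (b₁ b₂ : ℤ × ℤ) :
    hEnergy b₁ b₂ = max (b₂.1 + b₂.2 + phi0 l b₁) (b₁.1 + b₁.2 + eps0 l b₂) - l := by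
  rw [hEnergy, phi0_eq_max, eps0_eq_max]
  omega

section Energy

variable {l : ℤ} {b₁ b₂ b : ℤ × ℤ}

lemma hEnergy_of_e0_left (hφ : eps0 l b₂ ≤ phi0 l b₁) (h : e0 l b₁ = some b) :
    hEnergy b b₂ = hEnergy b₁ b₂ + 1 := by
  rw [hEnergy_eq_max l, hEnergy_eq_max l, phi0_of_e0_eq_some h]
  rcases e0_eq_some_iff.mp h with ⟨hlt, rfl⟩ | ⟨-, -, rfl⟩
  · have hφ₁ : phi0 l b₁ = l - (b₁.1 + b₁.2) := by rw [phi0_eq_max]; omega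
    have hε₂ : l - (b₂.1 + b₂.2) ≤ eps0 l b₂ := by rw [eps0_eq_max]; omega
    dsimp only
    omega
  · dsimp only
    omega

lemma hEnergy_of_e0_right (hφ : phi0 l b₁ < eps0 l b₂) (h : e0 l b₂ = some b) :
    hEnergy b₁ b = hEnergy b₁ b₂ - 1 := by
  rw [hEnergy_eq_max l, hEnergy_eq_max l, eps0_of_e0_eq_some h]
  rcases e0_eq_some_iff.mp h with ⟨-, rfl⟩ | ⟨hle, -, rfl⟩
  · dsimp only
    omega
  · have hε₂ : eps0 l b₂ = l - (b₂.1 + b₂.2) := by rw [eps0_eq_max]; omega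
    have hφ₁ : l - (b₁.1 + b₁.2) ≤ phi0 l b₁ := by rw [phi0_eq_max]; omega
    dsimp only
    omega

end Energy

theorem energy_e0_rule_general (l : ℤ) (b₁ b₂ : ℤ × ℤ) (p : (ℤ × ℤ) × (ℤ × ℤ))
    (h : e0Tensor l b₁ b₂ = some p) :
    (phi0 l b₁ ≥ eps0 l b₂ → hEnergy p.1 p.2 = hEnergy b₁ b₂ + 1) ∧
    (phi0 l b₁ < eps0 l b₂ → hEnergy p.1 p.2 = hEnergy b₁ b₂ - 1) := by
  unfold e0Tensor at h
  constructor
  · intro hφ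
    rw [if_pos hφ] at h
    obtain ⟨b, hb, rfl⟩ := Option.map_eq_some_iff.mp h
    exact hEnergy_of_e0_left hφ hb
  · intro hφ
    rw [if_neg (not_le.mpr hφ)] at h
    obtain ⟨b, hb, rfl⟩ := Option.map_eq_some_iff.mp h
    exact hEnergy_of_e0_right hφ hb

/-- the `0`-arrow rule for the classical energy function. -/
theorem energy_e0_rule (l : ℤ) (hl : 0 < l) (b₁ b₂ : ℤ × ℤ)
    (h₁ : inBad l b₁) (h₂ : inBad l b₂) (p : (ℤ × ℤ) × (ℤ × ℤ))
    (h : e0Tensor l b₁ b₂ = some p) :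
    (phi0 l b₁ ≥ eps0 l b₂ → hEnergy p.1 p.2 = hEnergy b₁ b₂ + 1) ∧
    (phi0 l b₁ < eps0 l b₂ → hEnergy p.1 p.2 = hEnergy b₁ b₂ - 1) :=
  energy_e0_rule_general l b₁ b₂ p h
end

section
/- The maps Ψ and Φ between the set of columns C = ⟨s, s̄, t̄⟩ of the level-l Young wall model and B_ad^aff≤0 = {(x,y)(-m)} are mutually inverse bijections. -/
/-- a column `⟨s, s̄, t̄⟩` of the level-`l` Young wall model, encoded so that `Ψ`
lands in `B_ad^aff≤0` -/
def isCol (l : ℤ) (c : ℤ × ℤ × ℤ) : Prop :=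
  0 ≤ c.1 ∧ 0 ≤ c.2.1 ∧ 0 ≤ c.2.2 ∧ 2 ∣ c.2.2 ∧
    (if c.2.2 ≤ c.2.1 then c.2.1 ≤ l
     else c.2.2 ≤ 2 * l ∧ l ≤ c.2.1 ∧ c.2.1 ≤ l + c.2.2 / 2)

/-- an element `(x,y)(-m)` of `B_ad^aff≤0`, encoded as `((x,y), m)` with `m ≥ 0` -/
def isAff (l : ℤ) (p : (ℤ × ℤ) × ℤ) : Prop :=
  0 ≤ p.1.1 ∧ 0 ≤ p.1.2 ∧ p.1.1 + p.1.2 ≤ l ∧ 0 ≤ p.2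

def Psi (l : ℤ) (c : ℤ × ℤ × ℤ) : (ℤ × ℤ) × ℤ :=
  if c.2.2 ≤ c.2.1 then ((c.2.1 - c.2.2 / 2, c.2.2 / 2), c.1)
  else ((l - c.2.2 / 2, l - c.2.1 + c.2.2 / 2), c.1)

def Phi (l : ℤ) (p : (ℤ × ℤ) × ℤ) : ℤ × ℤ × ℤ :=
  if p.1.2 ≤ p.1.1 then (p.2, p.1.1 + p.1.2, 2 * p.1.2)
  else (p.2, 2 * l - (p.1.1 + p.1.2), 2 * (l - p.1.1))

/-- `Ψ` and `Φ` are mutually inverse bijections between the set of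
columns and `B_ad^aff≤0`. -/
theorem Psi_Phi_inverse (l : ℤ) (hl : 0 < l) :
    (∀ c : ℤ × ℤ × ℤ, isCol l c → isAff l (Psi l c) ∧ Phi l (Psi l c) = c) ∧
    (∀ p : (ℤ × ℤ) × ℤ, isAff l p → isCol l (Phi l p) ∧ Psi l (Phi l p) = p) := by
  constructor
  · rintro ⟨s, sb, tb⟩ ⟨hs, hsb, htb, ⟨k, hk⟩, hcond⟩
    subst hk
    simp only [isCol, isAff, Psi, Phi, Prod.mk.injEq] at *
    rw [Int.mul_ediv_cancel_left _ (by norm_num)] at *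
    split_ifs at * <;> simp_all <;> omega
  · rintro ⟨⟨x, y⟩, m⟩ ⟨hx, hy, hxy, hm⟩
    simp only [isCol, isAff, Psi, Phi, Prod.mk.injEq] at *
    split_ifs <;>
      simp_all [Int.mul_ediv_cancel_left, Int.dvd_mul_right, Prod.ext_iff] <;> omega
end

section
/- The affine energy function H(b₁(m) ⊗ b₂(n)) = m - n - h(b₁ ⊗ b₂) is invariant under all Kashiwara operators: H(ẽ_i(b₁(m) ⊗ b₂(n))) = H(b₁(m) ⊗ b₂(n)) for i ∈ {0,1}, whenever ẽ_i(b₁(m) ⊗ b₂(n)) ≠ 0. -/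
def e1 (l : ℤ) (b : ℤ × ℤ) : Option (ℤ × ℤ) :=
  if 1 ≤ b.2 then some (b.1 + 1, b.2 - 1) else none

/-- `ẽ₀` on the affinization raises the degree by 1 -/
def e0Aff (l : ℤ) (p : (ℤ × ℤ) × ℤ) : Option ((ℤ × ℤ) × ℤ) :=
  (e0 l p.1).map (fun b => (b, p.2 + 1))

/-- `ẽ₁` on the affinization preserves the degree -/
def e1Aff (l : ℤ) (p : (ℤ × ℤ) × ℤ) : Option ((ℤ × ℤ) × ℤ) :=
  (e1 l p.1).map (fun b => (b, p.2))

/-- `ẽ₀` on a tensor product of affinized elements -/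
def e0TensorAff (l : ℤ) (p₁ p₂ : (ℤ × ℤ) × ℤ) : Option (((ℤ × ℤ) × ℤ) × ((ℤ × ℤ) × ℤ)) :=
  if phi0 l p₁.1 ≥ eps0 l p₂.1 then (e0Aff l p₁).map (fun p => (p, p₂))
  else (e0Aff l p₂).map (fun p => (p₁, p))

/-- `ẽ₁` on a tensor product of affinized elements (`φ₁(x,y) = x`, `ε₁(x,y) = y`) -/
def e1TensorAff (l : ℤ) (p₁ p₂ : (ℤ × ℤ) × ℤ) : Option (((ℤ × ℤ) × ℤ) × ((ℤ × ℤ) × ℤ)) :=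
  if p₁.1.1 ≥ p₂.1.2 then (e1Aff l p₁).map (fun p => (p, p₂))
  else (e1Aff l p₂).map (fun p => (p₁, p))

/-- affine energy function: `H(b₁(m) ⊗ b₂(n)) = m - n - h(b₁ ⊗ b₂)`
(here the stored integer is the degree itself) -/
def Haff (p₁ p₂ : (ℤ × ℤ) × ℤ) : ℤ := p₁.2 - p₂.2 - hEnergy p₁.1 p₂.1

section CoordinateSteps

variable {x₁ y₁ x₂ y₂ : ℤ}

theorem hEnergy_left_fst_sub_one (l : ℤ) (hxy : y₁ < x₁)
    (h : eps0 l (x₂, y₂) ≤ phi0 l (x₁, y₁)) :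
    hEnergy (x₁ - 1, y₁) (x₂, y₂) = hEnergy (x₁, y₁) (x₂, y₂) + 1 := by
  simp only [eps0, phi0, abs_of_pos (sub_pos.mpr hxy)] at h
  -- the max is `x₂ + y₂ - x₁ - y₁`, which exceeds the third term by `2 (x₁ - y₁) ≥ 2`
  have hs : x₁ + y₁ ≤ x₂ + y₂ := by linarith [neg_le_abs (x₂ - y₂)]
  have h4 : x₁ + y₁ + x₂ ≤ 3 * y₂ := by linarith [le_abs_self (x₂ - y₂)]
  simp only [hEnergy]
  omega

theorem hEnergy_left_snd_add_one (hxy : x₁ ≤ y₁) :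
    hEnergy (x₁, y₁ + 1) (x₂, y₂) = hEnergy (x₁, y₁) (x₂, y₂) + 1 := by
  -- the only term that decreases, `x₂ + y₂ - x₁ - y₁`, is at most the third one
  simp only [hEnergy]
  omega

theorem hEnergy_right_fst_sub_one (hxy : y₂ < x₂) :
    hEnergy (x₁, y₁) (x₂ - 1, y₂) = hEnergy (x₁, y₁) (x₂, y₂) - 1 := by
  -- the only term that increases, `x₁ + y₁ - x₂ - y₂`, is smaller than the fourth
  -- by `2 (x₂ - y₂) ≥ 2`
  simp only [hEnergy]
  omega

theorem hEnergy_right_snd_add_one (l : ℤ) (hxy : x₂ ≤ y₂)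
    (h : phi0 l (x₁, y₁) < eps0 l (x₂, y₂)) :
    hEnergy (x₁, y₁) (x₂, y₂ + 1) = hEnergy (x₁, y₁) (x₂, y₂) - 1 := by
  simp only [eps0, phi0, abs_of_nonpos (sub_nonpos.mpr hxy)] at h
  -- the max is `x₁ + y₁ - x₂ - y₂`, which exceeds the second and third terms by at least 2
  have hs : x₂ + y₂ < x₁ + y₁ := by linarith [le_abs_self (x₁ - y₁)]
  have h3 : x₂ + y₂ + y₁ < 3 * x₁ := by linarith [neg_le_abs (x₁ - y₁)]
  simp only [hEnergy]
  omega

end CoordinateSteps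

section OperatorSteps

variable {l : ℤ} {b₁ b₂ b₁' b₂' : ℤ × ℤ}

theorem hEnergy_e0_left (h : eps0 l b₂ ≤ phi0 l b₁) (he : e0 l b₁ = some b₁') :
    hEnergy b₁' b₂ = hEnergy b₁ b₂ + 1 := by
  unfold e0 at he
  split_ifs at he with hlt hle <;> cases he
  · exact hEnergy_left_fst_sub_one l hlt h
  · exact hEnergy_left_snd_add_one hle.1

theorem hEnergy_e0_right (h : phi0 l b₁ < eps0 l b₂) (he : e0 l b₂ = some b₂') :
    hEnergy b₁ b₂' = hEnergy b₁ b₂ - 1 := by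
  unfold e0 at he
  split_ifs at he with hlt hle <;> cases he
  · exact hEnergy_right_fst_sub_one hlt
  · exact hEnergy_right_snd_add_one l hle.1 h

/- `ẽ₁` preserves `x + y`, so only the third (on the left) or the fourth (on the right) term
of `hEnergy` moves; the third minus the fourth is `4 (y₂ - x₁)`, whose sign decides the
tensor rule. -/

theorem hEnergy_e1_left (h : b₂.2 ≤ b₁.1) (he : e1 l b₁ = some b₁') :
    hEnergy b₁' b₂ = hEnergy b₁ b₂ := by
  unfold e1 at he
  split_ifs at he
  cases he
  simp only [hEnergy]
  omega

theorem hEnergy_e1_right (h : b₁.1 < b₂.2) (he : e1 l b₂ = some b₂') :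
    hEnergy b₁ b₂' = hEnergy b₁ b₂ := by
  unfold e1 at he
  split_ifs at he
  cases he
  simp only [hEnergy]
  omega

end OperatorSteps

section TensorSteps

variable (l : ℤ) (b₁ b₂ : ℤ × ℤ) (m n : ℤ)

theorem Haff_e0TensorAff (q : ((ℤ × ℤ) × ℤ) × ((ℤ × ℤ) × ℤ))
    (hq : e0TensorAff l (b₁, m) (b₂, n) = some q) : Haff q.1 q.2 = Haff (b₁, m) (b₂, n) := by
  unfold e0TensorAff e0Aff at hq
  split_ifs at hq with h <;>
    obtain ⟨b', he, rfl⟩ := Option.map_eq_some_iff.mp (Option.map_map _ _ _ ▸ hq)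
  · simp only [Haff, Function.comp_apply, hEnergy_e0_left h he]
    ring
  · simp only [Haff, Function.comp_apply, hEnergy_e0_right (not_le.mp h) he]
    ring

theorem Haff_e1TensorAff (q : ((ℤ × ℤ) × ℤ) × ((ℤ × ℤ) × ℤ))
    (hq : e1TensorAff l (b₁, m) (b₂, n) = some q) : Haff q.1 q.2 = Haff (b₁, m) (b₂, n) := by
  unfold e1TensorAff e1Aff at hq
  split_ifs at hq with h <;>
    obtain ⟨b', he, rfl⟩ := Option.map_eq_some_iff.mp (Option.map_map _ _ _ ▸ hq)
  · simp only [Haff, Function.comp_apply, hEnergy_e1_left h he]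
  · simp only [Haff, Function.comp_apply, hEnergy_e1_right (not_le.mp h) he]

end TensorSteps

theorem Haff_invariant_general (l : ℤ) (b₁ b₂ : ℤ × ℤ) (m n : ℤ) :
    (∀ q, e0TensorAff l (b₁, m) (b₂, n) = some q → Haff q.1 q.2 = Haff (b₁, m) (b₂, n)) ∧
    (∀ q, e1TensorAff l (b₁, m) (b₂, n) = some q → Haff q.1 q.2 = Haff (b₁, m) (b₂, n)) :=
  ⟨Haff_e0TensorAff l b₁ b₂ m n, Haff_e1TensorAff l b₁ b₂ m n⟩

/-- the affine energy function is invariant under `ẽ₀` and `ẽ₁`. -/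
theorem Haff_invariant (l : ℤ) (hl : 0 < l) (b₁ b₂ : ℤ × ℤ) (m n : ℤ)
    (h₁ : inBad l b₁) (h₂ : inBad l b₂) :
    (∀ q, e0TensorAff l (b₁, m) (b₂, n) = some q → Haff q.1 q.2 = Haff (b₁, m) (b₂, n)) ∧
    (∀ q, e1TensorAff l (b₁, m) (b₂, n) = some q → Haff q.1 q.2 = Haff (b₁, m) (b₂, n)) :=
  Haff_invariant_general l b₁ b₂ m n
end
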